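/- Let A be the generator of a bounded holomorphic semigroup S(t) on a Banach space E satisfying ‖A^α S(t)‖ ≤ C_α t^{-α} for all t > 0 and α ∈ [0, 1]. Let f : (0, T] → E be continuous with ‖f(s)‖ ≤ N s^{γ+δ-1} for constants N ≥ 0, γ + δ > 0. Then for γ ≤ α < 1 - δ, the function v(t) = ∫₀ᵗ A^{α+δ} S(t-s) f(s) ds satisfies ‖v(t)‖ ≤ C_{α+δ} N B(1 - δ - α, γ + δ) t^{γ-α} for all t ∈ (0, T]. -/

import Mathlib

/-! Bounding the integrand by `C N (t - s)^{-(α+δ)} s^{γ+δ-1}` reduces the estimate to the Beta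
convolution `∫₀ᵗ (t - s)^{a-1} s^{b-1} ds = t^{a+b-1} B(a, b)`, obtained by substituting
`s = t (1 - u)`; the singularities at both ends are integrable because `α + δ < 1` and
`γ + δ > 0`. -/

open MeasureTheory

/-- Euler Beta function `B(x,y) = ∫₀¹ s^(x-1) (1-s)^(y-1) ds`. -/
noncomputable def eulerBeta (x y : ℝ) : ℝ :=
  ∫ s in (0:ℝ)..1, s ^ (x - 1) * (1 - s) ^ (y - 1)

open Set intervalIntegral

lemma eulerBeta_nonneg (a b : ℝ) : 0 ≤ eulerBeta a b :=
  integral_nonneg zero_le_one fun _ hu =>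
    mul_nonneg (Real.rpow_nonneg hu.1 _) (Real.rpow_nonneg (sub_nonneg.2 hu.2) _)

lemma intervalIntegrable_rpow_mul_sub_rpow_half {p q t : ℝ} (hp : -1 < p) (ht : 0 < t) :
    IntervalIntegrable (fun s => s ^ p * (t - s) ^ q) volume 0 (t / 2) := by
  refine (intervalIntegrable_rpow' hp).mul_continuousOn ?_
  refine ((continuous_const.sub continuous_id).continuousOn).rpow_const fun s hs => Or.inl ?_
  rw [uIcc_of_le (by linarith)] at hs
  exact (by linarith [hs.2] : 0 < t - s).ne'

lemma intervalIntegrable_sub_rpow_mul_rpow {p q t : ℝ} (hp : -1 < p) (hq : -1 < q) (ht : 0 < t) :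
    IntervalIntegrable (fun s => (t - s) ^ q * s ^ p) volume 0 t := by
  have left : IntervalIntegrable (fun s => (t - s) ^ q * s ^ p) volume 0 (t / 2) := by
    simpa only [mul_comm] using intervalIntegrable_rpow_mul_sub_rpow_half (q := q) hp ht
  have right : IntervalIntegrable (fun s => (t - s) ^ q * s ^ p) volume (t / 2) t := by
    have := (intervalIntegrable_rpow_mul_sub_rpow_half (q := p) hq ht).comp_sub_left t
    simpa only [sub_sub_cancel, sub_zero, sub_half] using this.symm
  exact left.trans right

lemma integral_sub_rpow_mul_rpow {a b t : ℝ} (ht : 0 < t) :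
    ∫ s in (0:ℝ)..t, (t - s) ^ (a - 1) * s ^ (b - 1) = t ^ (a + b - 1) * eulerBeta a b := by
  have reflect :=
    integral_comp_sub_left (fun s => (t - s) ^ (a - 1) * s ^ (b - 1)) t (a := 0) (b := t)
  have scale :=
    smul_integral_comp_mul_left (fun s => s ^ (a - 1) * (t - s) ^ (b - 1)) t (a := 0) (b := 1)
  simp only [sub_sub_cancel, sub_self, sub_zero] at reflect
  simp only [mul_zero, mul_one, smul_eq_mul] at scale
  rw [← reflect, ← scale, eulerBeta, ← intervalIntegral.integral_const_mul,
    ← intervalIntegral.integral_const_mul]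
  refine integral_congr fun u hu => ?_
  rw [uIcc_of_le zero_le_one] at hu
  rw [show t - t * u = t * (1 - u) by ring, Real.mul_rpow ht.le hu.1,
    Real.mul_rpow ht.le (sub_nonneg.2 hu.2), Real.rpow_sub_one ht.ne', Real.rpow_sub_one ht.ne',
    Real.rpow_sub_one ht.ne', Real.rpow_add ht]
  field_simp

lemma norm_integral_le_of_norm_le_sub_rpow_mul_rpow {E : Type*} [NormedAddCommGroup E]
    [NormedSpace ℝ E] {F : ℝ → E} {K a b t : ℝ} (hK : 0 ≤ K) (ha : 0 < a) (hb : 0 < b)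
    (ht : 0 < t) (hF : ∀ s ∈ Ioo 0 t, ‖F s‖ ≤ K * ((t - s) ^ (a - 1) * s ^ (b - 1))) :
    ‖∫ s in (0:ℝ)..t, F s‖ ≤ K * eulerBeta a b * t ^ (a + b - 1) := by
  have hF_ae :
      ∀ᵐ s ∂volume.restrict (uIoc 0 t), ‖F s‖ ≤ K * ((t - s) ^ (a - 1) * s ^ (b - 1)) := by
    rw [uIoc_of_le ht.le, ← Measure.restrict_congr_set Ioo_ae_eq_Ioc]
    exact ae_restrict_of_forall_mem measurableSet_Ioo hF
  have hint := (intervalIntegrable_sub_rpow_mul_rpow (p := b - 1) (q := a - 1)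
    (by linarith) (by linarith) ht).const_mul K
  calc ‖∫ s in (0:ℝ)..t, F s‖ ≤ |K * ∫ s in (0:ℝ)..t, (t - s) ^ (a - 1) * s ^ (b - 1)| := by
        simpa only [intervalIntegral.integral_const_mul] using
          norm_integral_le_abs_of_norm_le hF_ae hint
    _ = K * eulerBeta a b * t ^ (a + b - 1) := by
        rw [integral_sub_rpow_mul_rpow ht, abs_of_nonneg (by positivity [eulerBeta_nonneg a b])]
        ring

theorem stmt6_general {E : Type*} [NormedAddCommGroup E] [NormedSpace ℝ E]
    (T : ℝ)
    (AS : ℝ → ℝ → E →L[ℝ] E) (C : ℝ → ℝ) (hC : ∀ β, 0 < C β)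
    (hAS : ∀ β : ℝ, 0 ≤ β → ∀ t : ℝ, 0 < t → ∀ u : E, ‖AS β t u‖ ≤ C β * t ^ (-β) * ‖u‖)
    (f : ℝ → E) (N γ δ α : ℝ) (hN : 0 ≤ N) (hγδ : 0 < γ + δ)
    (hfN : ∀ s ∈ Set.Ioc (0:ℝ) T, ‖f s‖ ≤ N * s ^ (γ + δ - 1))
    (hα1 : γ ≤ α) (hα2 : α < 1 - δ) :
    ∀ t ∈ Set.Ioc (0:ℝ) T,
      ‖∫ s in (0:ℝ)..t, AS (α + δ) (t - s) (f s)‖ ≤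
        C (α + δ) * N * eulerBeta (1 - δ - α) (γ + δ) * t ^ (γ - α) := by
  rintro t ⟨ht, htT⟩
  have hexp : 1 - δ - α + (γ + δ) - 1 = γ - α := by ring
  rw [← hexp]
  refine norm_integral_le_of_norm_le_sub_rpow_mul_rpow (mul_nonneg (hC _).le hN)
    (by linarith) hγδ ht fun s ⟨hs0, hst⟩ => ?_
  have hts : 0 < t - s := by linarith
  calc ‖AS (α + δ) (t - s) (f s)‖ ≤ C (α + δ) * (t - s) ^ (-(α + δ)) * ‖f s‖ :=
        hAS _ (by linarith) _ hts _
    _ ≤ C (α + δ) * (t - s) ^ (-(α + δ)) * (N * s ^ (γ + δ - 1)) := by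
        gcongr
        · exact mul_nonneg (hC _).le (Real.rpow_nonneg hts.le _)
        · exact hfN s ⟨hs0, by linarith⟩
    _ = C (α + δ) * N * ((t - s) ^ (1 - δ - α - 1) * s ^ (γ + δ - 1)) := by
        rw [show 1 - δ - α - 1 = -(α + δ) by ring]
        ring

/-- Duhamel estimate in the Fujita–Kato iteration: `AS β t` stands for the
bounded operator `A^β S(t)`, with smoothing bound `‖A^β S(t)‖ ≤ C_β t^{-β}`. -/
theorem stmt6 {E : Type*} [NormedAddCommGroup E] [NormedSpace ℝ E] [CompleteSpace E]
    (T : ℝ) (hT : 0 < T)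
    (AS : ℝ → ℝ → E →L[ℝ] E) (C : ℝ → ℝ) (hC : ∀ β, 0 < C β)
    (hAS : ∀ β : ℝ, 0 ≤ β → ∀ t : ℝ, 0 < t → ∀ u : E, ‖AS β t u‖ ≤ C β * t ^ (-β) * ‖u‖)
    (f : ℝ → E) (N γ δ α : ℝ) (hN : 0 ≤ N) (hγδ : 0 < γ + δ) (hδ : 0 ≤ δ)
    (hf : ContinuousOn f (Set.Ioc 0 T))
    (hfN : ∀ s ∈ Set.Ioc (0:ℝ) T, ‖f s‖ ≤ N * s ^ (γ + δ - 1))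
    (hα1 : γ ≤ α) (hα2 : α < 1 - δ) :
    ∀ t ∈ Set.Ioc (0:ℝ) T,
      ‖∫ s in (0:ℝ)..t, AS (α + δ) (t - s) (f s)‖ ≤
        C (α + δ) * N * eulerBeta (1 - δ - α) (γ + δ) * t ^ (γ - α) :=
  stmt6_general T AS C hC hAS f N γ δ α hN hγδ hfN hα1 hα2
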